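/- Let P = Σ_{i=0}^m A_i X^i be a polynomial over FDDS (possibly with constant term A_0). If at least one non-constant coefficient A_i with i ≥ 1 is cancelable, then P is injective up to isomorphism: for all FDDS X, Y, if P(X) ≅ P(Y) then X ≅ Y. -/

import Mathlib

/-- Isomorphism of finite dynamical systems: a bijection commuting with the maps. -/
def FddsIso {α β : Type} (f : α → α) (g : β → β) : Prop :=
  ∃ e : α ≃ β, ⇑e ∘ f = g ∘ ⇑e

/-- A state is periodic if some positive iterate fixes it. -/
def IsPeriodicState {α : Type} (f : α → α) (x : α) : Prop :=
  ∃ n > 0, f^[n] x = x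

/-- The vertex set of the unroll of `(α, f)`. -/
def UnrollSet {α : Type} (f : α → α) : Set (α × ℕ) :=
  {p | IsPeriodicState f (f^[p.2] p.1)}

/-- The parent map of the unroll. -/
def unrollMap {α : Type} (f : α → α) (q : UnrollSet f) : UnrollSet f :=
  if h : q.1.2 = 0 then q
  else ⟨(f q.1.1, q.1.2 - 1), by
    obtain ⟨⟨x, k⟩, hq⟩ := q
    simp only at h
    obtain ⟨k', rfl⟩ := Nat.exists_eq_succ_of_ne_zero h
    simpa [UnrollSet, Function.iterate_succ_apply] using hq⟩

/-- Isomorphism of unrolls. -/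
def UnrollIso {α β : Type} (f : α → α) (g : β → β) : Prop :=
  ∃ φ : UnrollSet f ≃ UnrollSet g, ⇑φ ∘ unrollMap f = unrollMap g ∘ ⇑φ

/-- Vertices of the cut at depth `n` of the unroll. -/
def CutSet {α : Type} (f : α → α) (n : ℕ) : Set (α × ℕ) :=
  {p | p ∈ UnrollSet f ∧ p.2 ≤ n}

/-- The parent map of the cut at depth `n`. -/
def cutMap {α : Type} (f : α → α) (n : ℕ) (q : CutSet f n) : CutSet f n :=
  if h : q.1.2 = 0 then q
  else ⟨(f q.1.1, q.1.2 - 1), by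
    obtain ⟨⟨x, k⟩, hq⟩ := q
    obtain ⟨hq1, hq2⟩ := hq
    simp only at h hq2 ⊢
    obtain ⟨k', rfl⟩ := Nat.exists_eq_succ_of_ne_zero h
    refine ⟨by simpa [UnrollSet, Function.iterate_succ_apply] using hq1, by omega⟩⟩

/-- Isomorphism of cuts at depth `n`. -/
def CutIso {α β : Type} (f : α → α) (g : β → β) (n : ℕ) : Prop :=
  ∃ φ : CutSet f n ≃ CutSet g n, ⇑φ ∘ cutMap f n = cutMap g n ∘ ⇑φ

/-- The states of the components whose cycle length divides `p`. -/
def DivSet {α : Type} (f : α → α) (p : ℕ) : Set α :=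
  {x | ∃ N, f^[N + p] x = f^[N] x}

/-- The restriction of `f` to `DivSet f p`. -/
def divMap {α : Type} (f : α → α) (p : ℕ) (q : DivSet f p) : DivSet f p :=
  ⟨f q.1, by
    obtain ⟨x, N, hN⟩ := q
    exact ⟨N, by
      rw [← Function.iterate_succ_apply, ← Function.iterate_succ_apply,
        Function.iterate_succ_apply', Function.iterate_succ_apply', hN]⟩⟩

/-- `k`-th power of an FDDS: map on `Fin k → α`. -/
def powMap {α : Type} (f : α → α) (k : ℕ) (v : Fin k → α) : Fin k → α := f ∘ v

/-- Evaluation of the polynomial `Σ_{i=0}^m A_i X^i` at `(α, f)`. -/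
def polyEval {m : ℕ} {γ : Fin (m + 1) → Type} (g : ∀ i, γ i → γ i)
    {α : Type} (f : α → α)
    (x : Σ i : Fin (m + 1), γ i × (Fin i.val → α)) :
    Σ i : Fin (m + 1), γ i × (Fin i.val → α) :=
  ⟨x.1, g x.1 x.2.1, f ∘ x.2.2⟩

/-- Evaluation of the constant-free polynomial `Σ_{i=1}^m A_i X^i` at `(α, f)`. -/
def polyEvalNC {m : ℕ} {γ : Fin m → Type} (g : ∀ i, γ i → γ i)
    {α : Type} (f : α → α)
    (x : Σ i : Fin m, γ i × (Fin (i.val + 1) → α)) :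
    Σ i : Fin m, γ i × (Fin (i.val + 1) → α) :=
  ⟨x.1, g x.1 x.2.1, f ∘ x.2.2⟩

/-- An FDDS is cancelable if it can be canceled from products. -/
def Cancelable {α : Type} (f : α → α) : Prop :=
  ∀ (β γ : Type) [Fintype β] [Fintype γ] (g : β → β) (h : γ → γ),
    FddsIso (Prod.map f g) (Prod.map f h) → FddsIso g h


/-!
By Lovász's counting argument, two finite systems are isomorphic as soon as every finite system
has equally many homomorphisms into each of them, and splitting a test system into its connected
components it is enough to test connected ones. A homomorphism from a connected `w` into a sum
lands in a single summand, so `#Hom(w, P(X)) = ∑ #Hom(w, Aᵢ) * #Hom(w, X) ^ i`: a polynomial with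
natural coefficients in `#Hom(w, X)`, strictly increasing once some `#Hom(w, Aᵢ)` with `i ≥ 1`
is positive, which holds when `Aᵢ` has a fixed point.

A cancelable `A` has a fixed point. Otherwise let `L = |A|!` and let `B`, `C` be the sums of
cycles with `μ(d)⁺ * (L / d)`, resp. `μ(d)⁻ * (L / d)`, copies of the `d`-cycle for `d ∣ L`.
A connected `w` whose cycle has length `ℓ` maps to `A` only if `gcd(L, ℓ) ≠ 1`, and then
`#Hom(w, B) - #Hom(w, C) = L * ∑_{d ∣ gcd(L, ℓ)} μ(d) = 0`; hence `A × B ≅ A × C`, although `B`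
has a fixed point and `C` has none.
-/

open Function

namespace Fdds

abbrev Hom {κ α : Type} (w : κ → κ) (f : α → α) : Type := {h : κ → α // Semiconj h w f}

noncomputable def homCount {κ α : Type} (w : κ → κ) (f : α → α) : ℕ := Nat.card (Hom w f)

noncomputable def injCount {κ α : Type} (w : κ → κ) (f : α → α) : ℕ :=
  Nat.card {h : Hom w f // Injective h.1}

def IsConnected {κ : Type} (w : κ → κ) : Prop :=
  Nonempty κ ∧ ∀ x y : κ, ∃ a b : ℕ, w^[a] x = w^[b] y

variable {κ α β : Type} {w : κ → κ} {f : α → α} {g : β → β}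

theorem fddsIso_iff_semiconj : FddsIso f g ↔ ∃ e : α ≃ β, Semiconj e f g := by
  simp only [FddsIso, semiconj_iff_comp_eq]

theorem homCount_congr_right (w : κ → κ) (h : FddsIso f g) : homCount w f = homCount w g := by
  obtain ⟨e, he⟩ := fddsIso_iff_semiconj.1 h
  have he' : Semiconj e.symm g f := he.inverse_left e.left_inv e.right_inv
  exact Nat.card_congr <| ((Equiv.refl κ).arrowCongr e).subtypeEquiv fun h =>
    ⟨he.comp_left, fun hh => by
      convert he'.comp_left hh
      exact funext fun x => (e.symm_apply_apply (h x)).symm⟩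

theorem homCount_prod (w : κ → κ) (f : α → α) (g : β → β) :
    homCount w (Prod.map f g) = homCount w f * homCount w g := by
  rw [homCount, homCount, homCount, ← Nat.card_prod]
  exact Nat.card_congr
    { toFun := fun h => (⟨Prod.fst ∘ h.1, fun x => congrArg Prod.fst (h.2 x)⟩,
        ⟨Prod.snd ∘ h.1, fun x => congrArg Prod.snd (h.2 x)⟩)
      invFun := fun h => ⟨fun x => (h.1.1 x, h.2.1 x), fun x => Prod.ext (h.1.2 x) (h.2.2 x)⟩
      left_inv := fun _ => rfl
      right_inv := fun _ => rfl }

theorem homCount_powMap (w : κ → κ) (f : α → α) (k : ℕ) :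
    homCount w (powMap f k) = homCount w f ^ k := by
  rw [homCount, homCount, ← Nat.card_fin k, ← Nat.card_fun, Nat.card_fin]
  exact Nat.card_congr
    { toFun := fun h i => ⟨fun x => h.1 x i, fun x => congrFun (h.2 x) i⟩
      invFun := fun h => ⟨fun x i => (h i).1 x, fun x => funext fun i => (h i).2 x⟩
      left_inv := fun _ => rfl
      right_inv := fun _ => rfl }

theorem homCount_pos_of_isFixedPt [Finite κ] [Finite α] (w : κ → κ) {a : α}
    (ha : IsFixedPt f a) : 0 < homCount w f :=
  Nat.card_pos_iff.2 ⟨⟨⟨fun _ => a, fun _ => ha.symm⟩⟩, inferInstance⟩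

theorem IsConnected.comp_hom_eq (hw : IsConnected w) (h : Hom w f) {φ : α → β}
    (hφ : ∀ y, φ (f y) = φ y) (x y : κ) : φ (h.1 x) = φ (h.1 y) := by
  obtain ⟨a, b, hab⟩ := hw.2 x y
  have hφ' : ∀ n y, φ (f^[n] y) = φ y := fun n y => by
    induction n with
    | zero => rfl
    | succ n ih => rw [iterate_succ_apply', hφ, ih]
  rw [← hφ' a (h.1 x), ← hφ' b (h.1 y), ← h.2.iterate_right a x, ← h.2.iterate_right b y, hab]

theorem homCount_id_of_isConnected (hw : IsConnected w) (β : Type) :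
    homCount w (id : β → β) = Nat.card β := by
  obtain ⟨x₀⟩ := hw.1
  refine Nat.card_congr
    { toFun := fun h => h.1 x₀
      invFun := fun b => ⟨fun _ => b, fun _ => rfl⟩
      left_inv := fun h => Subtype.ext (funext fun x => ?_)
      right_inv := fun _ => rfl }
  exact hw.comp_hom_eq h (φ := id) (fun _ => rfl) x₀ x

theorem homCount_sigma [Finite κ] {ι : Type} [Fintype ι] {δ : ι → Type} [∀ i, Finite (δ i)]
    (hw : IsConnected w) (v : ∀ i, δ i → δ i) :
    homCount w (fun p : Σ i, δ i => (⟨p.1, v p.1 p.2⟩ : Σ i, δ i)) = ∑ i, homCount w (v i) := by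
  obtain ⟨x₀⟩ := hw.1
  let F : (Σ i, Hom w (v i)) → Hom w (fun p : Σ i, δ i => (⟨p.1, v p.1 p.2⟩ : Σ i, δ i)) :=
    fun p => ⟨fun x => ⟨p.1, p.2.1 x⟩, fun x => by simp only [p.2.2 x]⟩
  have hF : Bijective F := by
    refine ⟨fun ⟨i, h⟩ ⟨j, h'⟩ hhh => ?_, fun h => ?_⟩
    · obtain rfl : i = j := congrArg Sigma.fst (congrFun (congrArg Subtype.val hhh) x₀)
      exact Sigma.ext rfl <| heq_of_eq <| Subtype.ext <| funext fun x =>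
        eq_of_heq (Sigma.mk.inj (congrFun (congrArg Subtype.val hhh) x)).2
    · have hfst : ∀ x, (h.1 x).1 = (h.1 x₀).1 := fun x =>
        hw.comp_hom_eq h (φ := Sigma.fst) (fun _ => rfl) x x₀
      have hk : ∀ x, ∃ y, h.1 x = ⟨(h.1 x₀).1, y⟩ := fun x => by
        have hx := hfst x
        generalize h.1 x = p at hx ⊢
        obtain ⟨i, y⟩ := p
        subst hx
        exact ⟨y, rfl⟩
      choose k hk using hk
      refine ⟨⟨(h.1 x₀).1, k, fun x => sigma_mk_injective ?_⟩,
        Subtype.ext (funext fun x => (hk x).symm)⟩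
      rw [← hk, h.2 x, hk]
  rw [homCount, ← Nat.card_congr (Equiv.ofBijective F hF), Nat.card_sigma]
  rfl

section Components

variable (w)

def orbitSetoid : Setoid κ where
  r x y := ∃ a b : ℕ, w^[a] x = w^[b] y
  iseqv :=
    { refl := fun _ => ⟨0, 0, rfl⟩
      symm := fun ⟨a, b, h⟩ => ⟨b, a, h.symm⟩
      trans := fun ⟨a, b, h⟩ ⟨c, d, h'⟩ => ⟨c + a, b + d, by
        rw [iterate_add_apply, h, ← iterate_add_apply, add_comm c b, iterate_add_apply, h',
          ← iterate_add_apply]⟩ }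

abbrev Component (q : Quotient (orbitSetoid w)) : Type := {x : κ // ⟦x⟧ = q}

theorem mk_apply_eq_mk (x : κ) : (⟦w x⟧ : Quotient (orbitSetoid w)) = ⟦x⟧ :=
  Quotient.sound ⟨0, 1, rfl⟩

def componentMap (q : Quotient (orbitSetoid w)) (x : Component w q) : Component w q :=
  ⟨w x.1, (mk_apply_eq_mk w x.1).trans x.2⟩

theorem isConnected_componentMap (q : Quotient (orbitSetoid w)) :
    IsConnected (componentMap w q) := by
  refine ⟨⟨⟨q.out, q.out_eq⟩⟩, fun ⟨x, hx⟩ ⟨y, hy⟩ => ?_⟩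
  obtain ⟨a, b, hab⟩ := Quotient.exact (hx.trans hy.symm)
  have hiter : ∀ n (z : Component w q), ((componentMap w q)^[n] z).1 = w^[n] z.1 :=
    fun n => (Semiconj.iterate_right (f := Subtype.val) (fun _ => rfl) n ·)
  exact ⟨a, b, Subtype.ext (by rw [hiter, hiter, hab])⟩

def homEquivPiComponent (f : α → α) : Hom w f ≃ ∀ q, Hom (componentMap w q) f where
  toFun h q := ⟨fun x => h.1 x.1, fun x => h.2 x.1⟩
  invFun H := ⟨fun x => (H ⟦x⟧).1 ⟨x, rfl⟩, fun x => by
    have hmove : ∀ q (hq : ⟦w x⟧ = q), (H ⟦w x⟧).1 ⟨w x, rfl⟩ = (H q).1 ⟨w x, hq⟩ := by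
      rintro _ rfl
      rfl
    exact (hmove _ (mk_apply_eq_mk w x)).trans ((H ⟦x⟧).2 ⟨x, rfl⟩)⟩
  left_inv _ := rfl
  right_inv H := funext fun q => Subtype.ext <| funext fun ⟨x, hx⟩ => by subst hx; rfl

end Components

theorem homCount_eq_of_isConnected [Finite κ]
    (H : ∀ (κ : Type) [Finite κ] (w : κ → κ), IsConnected w → homCount w f = homCount w g)
    (w : κ → κ) : homCount w f = homCount w g := by
  have := Fintype.ofFinite (Quotient (orbitSetoid w))
  rw [homCount, homCount, Nat.card_congr (homEquivPiComponent w f),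
    Nat.card_congr (homEquivPiComponent w g), Nat.card_pi, Nat.card_pi]
  exact Finset.prod_congr rfl fun q _ => H _ _ (isConnected_componentMap w q)

instance _root_.Setoid.instFinite [Finite κ] : Finite (Setoid κ) :=
  Finite.of_injective (fun r : Setoid κ => r.r) fun r s h => Setoid.ext fun a b => by
    simp only [h]

theorem card_quotient_lt [Finite κ] {r : Setoid κ} (hr : r ≠ ⊥) :
    Nat.card (Quotient r) < Nat.card κ := by
  have := Fintype.ofFinite κ
  have := Fintype.ofFinite (Quotient r)
  rw [Nat.card_eq_fintype_card, Nat.card_eq_fintype_card]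
  refine Fintype.card_lt_of_surjective_not_injective _ Quotient.mk_surjective fun hinj => hr ?_
  rw [← Setoid.ker_mk_eq r]
  exact Setoid.ker_eq_bot_iff.2 hinj

def Compatible (r : Setoid κ) (w : κ → κ) : Prop := ∀ x y, r x y → r (w x) (w y)

section KernelDecomposition

variable (w) (r : Setoid κ) (hr : Compatible r w)

def quotMap : Quotient r → Quotient r := Quotient.map' w hr

theorem Hom.compatible_ker (h : Hom w f) : Compatible (Setoid.ker h.1) w := fun x y hxy =>
  (h.2 x).trans ((congrArg f hxy).trans (h.2 y).symm)

def homKerEquiv (f : α → α) :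
    {h : Hom w f // Setoid.ker h.1 = r} ≃ {φ : Hom (quotMap w r hr) f // Injective φ.1} where
  toFun h := ⟨⟨Quotient.lift h.1.1 h.2.ge, fun q => by
    induction q using Quotient.ind
    exact h.1.2 _⟩,
    (Setoid.lift_injective_iff_ker_eq_of_le h.2.ge).2 h.2⟩
  invFun φ := ⟨⟨φ.1.1 ∘ Quotient.mk r, fun x => φ.1.2 ⟦x⟧⟩,
    Setoid.ext fun _ _ => φ.2.eq_iff.trans Quotient.eq⟩
  left_inv _ := rfl
  right_inv φ := Subtype.ext <| Subtype.ext <| funext fun q => by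
    induction q using Quotient.ind
    rfl

theorem card_ker_eq_injCount (f : α → α) :
    Nat.card {h : Hom w f // Setoid.ker h.1 = r} = injCount (quotMap w r hr) f :=
  Nat.card_congr (homKerEquiv w r hr f)

end KernelDecomposition

theorem card_ker_eq_zero {r : Setoid κ} (hr : ¬Compatible r w) (f : α → α) :
    Nat.card {h : Hom w f // Setoid.ker h.1 = r} = 0 :=
  have : IsEmpty {h : Hom w f // Setoid.ker h.1 = r} :=
    ⟨fun ⟨h, hh⟩ => hr (hh ▸ h.compatible_ker)⟩
  Nat.card_of_isEmpty

theorem card_ker_bot (f : α → α) :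
    Nat.card {h : Hom w f // Setoid.ker h.1 = ⊥} = injCount w f :=
  Nat.card_congr (Equiv.subtypeEquivRight fun _ => Setoid.ker_eq_bot_iff)

theorem homCount_eq_sum_card_ker [Finite κ] [Finite α] [Fintype (Setoid κ)] (f : α → α) :
    homCount w f = ∑ r : Setoid κ, Nat.card {h : Hom w f // Setoid.ker h.1 = r} := by
  rw [homCount, ← Nat.card_congr (Equiv.sigmaFiberEquiv fun h : Hom w f => Setoid.ker h.1),
    Nat.card_sigma]

theorem injCount_eq_of_homCount_eq [Finite α] [Finite β]
    (H : ∀ (κ : Type) [Finite κ] (w : κ → κ), homCount w f = homCount w g)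
    [Finite κ] (w : κ → κ) : injCount w f = injCount w g := by
  classical
  -- a homomorphism with kernel `r ≠ ⊥` is an injective one from the smaller quotient by `r`
  induction hn : Nat.card κ using Nat.strong_induction_on generalizing κ with
  | _ n ih =>
  have := Fintype.ofFinite (Setoid κ)
  have hfibres : ∀ r ∈ Finset.univ.erase (⊥ : Setoid κ),
      Nat.card {h : Hom w f // Setoid.ker h.1 = r} =
        Nat.card {h : Hom w g // Setoid.ker h.1 = r} := by
    intro r hr
    by_cases hcomp : Compatible r w
    · rw [card_ker_eq_injCount w r hcomp, card_ker_eq_injCount w r hcomp]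
      exact ih _ (hn ▸ card_quotient_lt (Finset.ne_of_mem_erase hr)) _ rfl
    · rw [card_ker_eq_zero hcomp, card_ker_eq_zero hcomp]
  have hsum := H κ w
  rw [homCount_eq_sum_card_ker, homCount_eq_sum_card_ker,
    ← Finset.add_sum_erase _ _ (Finset.mem_univ ⊥), ← Finset.add_sum_erase _ _ (Finset.mem_univ ⊥),
    Finset.sum_congr rfl hfibres, card_ker_bot, card_ker_bot] at hsum
  exact Nat.add_right_cancel hsum

theorem fddsIso_of_homCount_eq [Finite α] [Finite β]
    (H : ∀ (κ : Type) [Finite κ] (w : κ → κ), homCount w f = homCount w g) : FddsIso f g := by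
  have hself : ∀ {ρ : Type} [Finite ρ] (u : ρ → ρ), 0 < injCount u u := fun u =>
    Nat.card_pos_iff.2 ⟨⟨⟨⟨id, Semiconj.id_left⟩, injective_id⟩⟩, inferInstance⟩
  obtain ⟨⟨⟨e, he⟩, hforth⟩⟩ :=
    (Nat.card_pos_iff.1 (injCount_eq_of_homCount_eq H f ▸ hself f)).1
  obtain ⟨⟨⟨e', _⟩, hback⟩⟩ :=
    (Nat.card_pos_iff.1 ((injCount_eq_of_homCount_eq H g).symm ▸ hself g)).1
  have hbij : Bijective e :=
    hforth.bijective_of_nat_card_le (Nat.card_le_card_of_injective e' hback)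
  exact fddsIso_iff_semiconj.2 ⟨Equiv.ofBijective e hbij, he⟩

theorem fddsIso_of_homCount_eq_of_isConnected [Finite α] [Finite β]
    (H : ∀ (κ : Type) [Finite κ] (w : κ → κ), IsConnected w → homCount w f = homCount w g) :
    FddsIso f g :=
  fddsIso_of_homCount_eq fun _ _ => homCount_eq_of_isConnected H

theorem _root_.Function.iterate_eq_iterate_iff_modEq {p : κ} (hp : p ∈ periodicPts w) {m n : ℕ} :
    w^[m] p = w^[n] p ↔ m ≡ n [MOD minimalPeriod w p] := by
  have hpos := minimalPeriod_pos_of_mem_periodicPts hp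
  rw [← iterate_mod_minimalPeriod_eq (n := m), ← iterate_mod_minimalPeriod_eq (n := n),
    iterate_eq_iterate_iff_of_lt_minimalPeriod (Nat.mod_lt _ hpos) (Nat.mod_lt _ hpos)]
  rfl

theorem Hom.eq_of_apply_eq (hw : IsConnected w) (hf : Injective f) {h h' : Hom w f} {x₀ : κ}
    (h₀ : h.1 x₀ = h'.1 x₀) : h = h' := by
  refine Subtype.ext (funext fun x => ?_)
  obtain ⟨a, b, hab⟩ := hw.2 x₀ x
  apply hf.iterate b
  rw [← h.2.iterate_right, ← h'.2.iterate_right, ← hab, h.2.iterate_right, h'.2.iterate_right, h₀]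

def cycle (d : ℕ) (x : ZMod d) : ZMod d := x + 1

theorem Hom.apply_iterate_cycle {d : ℕ} (h : Hom w (cycle d)) (a : ℕ) (x : κ) :
    h.1 (w^[a] x) = h.1 x + a := by
  rw [h.2.iterate_right]
  exact (add_right_iterate_apply 1 _).trans (by rw [nsmul_one])

theorem dvd_minimalPeriod_of_hom_cycle {d : ℕ} (h : Hom w (cycle d)) (p : κ) :
    d ∣ minimalPeriod w p := by
  have hp := h.apply_iterate_cycle (minimalPeriod w p) p
  rw [iterate_minimalPeriod, left_eq_add] at hp
  exact (ZMod.natCast_eq_zero_iff _ _).1 hp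

theorem IsConnected.nonempty_hom_cycle {d : ℕ} (hw : IsConnected w) {p : κ}
    (hp : p ∈ periodicPts w) (hd : d ∣ minimalPeriod w p) : Nonempty (Hom w (cycle d)) := by
  -- `x ↦ a - b` for any `w^[a] p = w^[b] x` is well defined mod `d` since `d` divides the period
  choose a b hab using fun x => hw.2 p x
  have hcongr : ∀ x a' b', w^[a'] p = w^[b'] x → (a' : ZMod d) - b' = a x - b x := by
    intro x a' b' h'
    have hiter : w^[a' + b x] p = w^[b' + a x] p := by
      rw [iterate_add_apply, (Commute.iterate_iterate_self w a' (b x)).eq, h',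
        ← (Commute.iterate_iterate_self w b' (b x)).eq, ← hab, ← iterate_add_apply]
    have hcast := (ZMod.natCast_eq_natCast_iff _ _ d).2
      (((iterate_eq_iterate_iff_modEq hp).1 hiter).of_dvd hd)
    push_cast at hcast
    linear_combination hcast
  refine ⟨⟨fun x => a x - b x, fun x => ?_⟩⟩
  have h' : w^[a x + 1] p = w^[b x] (w x) := by
    rw [iterate_succ_apply', hab, ← iterate_succ_apply, iterate_succ_apply']
  have := hcongr (w x) (a x + 1) (b x) h'
  push_cast at this
  simp only [cycle]
  linear_combination -this

theorem homCount_cycle (hw : IsConnected w) {p : κ} (hp : p ∈ periodicPts w) (d : ℕ) [NeZero d] :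
    homCount w (cycle d) = if d ∣ minimalPeriod w p then d else 0 := by
  split_ifs with hd
  · obtain ⟨h₀⟩ := hw.nonempty_hom_cycle hp hd
    obtain ⟨x₀⟩ := hw.1
    have E : Hom w (cycle d) ≃ ZMod d :=
      { toFun := fun h => h.1 x₀ - h₀.1 x₀
        invFun := fun c => ⟨fun x => h₀.1 x + c, fun x => by
          show h₀.1 (w x) + c = cycle d (h₀.1 x + c)
          rw [h₀.2 x]
          simp only [cycle]
          ring⟩
        left_inv := fun h => Hom.eq_of_apply_eq hw (add_left_injective 1) (x₀ := x₀) (by simp)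
        right_inv := fun c => by simp }
    exact (Nat.card_congr E).trans (Nat.card_zmod d)
  · have : IsEmpty (Hom w (cycle d)) := ⟨fun h => hd (dvd_minimalPeriod_of_hom_cycle h p)⟩
    exact Nat.card_of_isEmpty

theorem _root_.Function.exists_mem_periodicPts [Finite κ] [Nonempty κ] (w : κ → κ) :
    ∃ p, p ∈ periodicPts w := by
  obtain ⟨x⟩ := ‹Nonempty κ›
  obtain ⟨i, j, hij, heq⟩ :=
    Set.Finite.exists_lt_map_eq_of_forall_mem (f := fun n : ℕ => w^[n] x) (t := Set.univ)
      (fun _ => trivial) Set.finite_univ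
  refine ⟨w^[i] x, mk_mem_periodicPts (Nat.sub_pos_of_lt hij) ?_⟩
  show w^[j - i] (w^[i] x) = w^[i] x
  rw [← iterate_add_apply, Nat.sub_add_cancel hij.le, heq]

abbrev Cycles (L : ℕ) (n : ℕ → ℕ) : Type := Σ d : L.divisors, Fin (n d) × ZMod d

instance (L : ℕ) (d : L.divisors) : NeZero (d : ℕ) := ⟨(Nat.pos_of_mem_divisors d.2).ne'⟩

def cyclesMap (L : ℕ) (n : ℕ → ℕ) (x : Cycles L n) : Cycles L n := ⟨x.1, x.2.1, cycle x.1 x.2.2⟩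

theorem homCount_cyclesMap [Finite κ] (hw : IsConnected w) {p : κ} (hp : p ∈ periodicPts w)
    (L : ℕ) (n : ℕ → ℕ) :
    homCount w (cyclesMap L n) =
      ∑ d ∈ L.divisors, n d * if d ∣ minimalPeriod w p then d else 0 := by
  rw [← Finset.sum_coe_sort L.divisors]
  refine (homCount_sigma hw fun d : L.divisors => Prod.map id (cycle d)).trans
    (Finset.sum_congr rfl fun d _ => ?_)
  rw [homCount_prod, homCount_id_of_isConnected hw, homCount_cycle hw hp, Nat.card_fin]

theorem exists_isFixedPt_cyclesMap_iff {L : ℕ} (hL : L ≠ 0) (n : ℕ → ℕ) :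
    (∃ x, IsFixedPt (cyclesMap L n) x) ↔ 0 < n 1 := by
  constructor
  · rintro ⟨⟨d, i, x⟩, hx⟩
    have hd : (d : ℕ) = 1 := by
      have hx' : x + 1 = x := congrArg Prod.snd (eq_of_heq (Sigma.mk.inj hx).2)
      exact ZMod.one_eq_zero_iff.1 (by simpa using hx')
    exact hd ▸ i.pos
  · intro hn
    exact ⟨⟨⟨1, Nat.one_mem_divisors.2 hL⟩, ⟨0, hn⟩, 0⟩, by
      simp only [IsFixedPt, cyclesMap, cycle]
      congr 2⟩

section Moebius

open ArithmeticFunction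
open scoped ArithmeticFunction.Moebius

theorem sum_moebius_divisors_eq_zero {n : ℕ} (hn : n ≠ 1) : ∑ d ∈ n.divisors, μ d = 0 := by
  rw [← coe_mul_zeta_apply, moebius_mul_coe_zeta, one_apply_ne hn]

theorem sum_moebius_cycle_counts_eq {L ℓ : ℕ} (hL : L ≠ 0) (hℓ : Nat.gcd L ℓ ≠ 1) :
    ∑ d ∈ L.divisors, (μ d).toNat * (L / d) * (if d ∣ ℓ then d else 0) =
      ∑ d ∈ L.divisors, (-μ d).toNat * (L / d) * (if d ∣ ℓ then d else 0) := by
  have hterm : ∀ d ∈ L.divisors,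
      ((μ d).toNat * (L / d) * (if d ∣ ℓ then d else 0) : ℕ) -
        ((-μ d).toNat * (L / d) * (if d ∣ ℓ then d else 0) : ℕ) =
        if d ∣ ℓ then μ d * L else (0 : ℤ) := by
    intro d hd
    split_ifs
    · obtain ⟨k, rfl⟩ := Nat.dvd_of_mem_divisors hd
      rw [Nat.mul_div_cancel_left k (Nat.pos_of_mem_divisors hd)]
      push_cast
      linear_combination (k * d : ℤ) * Int.toNat_sub_toNat_neg (μ d)
    · simp
  have hfilter : {d ∈ L.divisors | d ∣ ℓ} = (Nat.gcd L ℓ).divisors := by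
    rw [← Nat.divisors_filter_dvd_of_dvd hL (Nat.gcd_dvd_left L ℓ)]
    exact Finset.filter_congr fun d hd => by
      rw [Nat.dvd_gcd_iff, and_iff_right (Nat.dvd_of_mem_divisors hd)]
  apply Nat.cast_injective (R := ℤ)
  rw [← sub_eq_zero, Nat.cast_sum, Nat.cast_sum, ← Finset.sum_sub_distrib,
    Finset.sum_congr rfl hterm, ← Finset.sum_filter, hfilter, ← Finset.sum_mul, sum_moebius_divisors_eq_zero hℓ, zero_mul]

theorem Hom.gcd_factorial_card_minimalPeriod_ne_one [Fintype α] (hf : ∀ a, ¬IsFixedPt f a)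
    (h : Hom w f) {p : κ} (hp : p ∈ periodicPts w) :
    Nat.gcd (Fintype.card α).factorial (minimalPeriod w p) ≠ 1 := by
  have hhp : IsPeriodicPt f (minimalPeriod w p) (h.1 p) := by
    rw [IsPeriodicPt, IsFixedPt, ← h.2.iterate_right, iterate_minimalPeriod]
  have hmem : h.1 p ∈ periodicPts f :=
    mk_mem_periodicPts (minimalPeriod_pos_of_mem_periodicPts hp) hhp
  intro hgcd
  have hdvd := Nat.dvd_gcd (isPeriodicPt_factorial_card_of_mem_periodicPts hmem).minimalPeriod_dvd
    hhp.minimalPeriod_dvd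
  rw [hgcd, Nat.dvd_one, minimalPeriod_eq_one_iff_isFixedPt] at hdvd
  exact hf _ hdvd

theorem _root_.Cancelable.exists_isFixedPt [Fintype α] (hf : Cancelable f) :
    ∃ a, IsFixedPt f a := by
  by_contra! hfix
  set L := (Fintype.card α).factorial
  have hL : L ≠ 0 := Nat.factorial_ne_zero _
  have hprod : FddsIso (Prod.map f (cyclesMap L fun d => (μ d).toNat * (L / d)))
      (Prod.map f (cyclesMap L fun d => (-μ d).toNat * (L / d))) := by
    refine fddsIso_of_homCount_eq_of_isConnected fun κ _ w hw => ?_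
    rw [homCount_prod, homCount_prod]
    rcases Nat.eq_zero_or_pos (homCount w f) with h0 | hpos
    · rw [h0, zero_mul, zero_mul]
    obtain ⟨h⟩ := (Nat.card_pos_iff.1 hpos).1
    have := hw.1
    obtain ⟨p, hp⟩ := exists_mem_periodicPts w
    rw [homCount_cyclesMap hw hp, homCount_cyclesMap hw hp,
      sum_moebius_cycle_counts_eq hL (h.gcd_factorial_card_minimalPeriod_ne_one hfix hp)]
  obtain ⟨e, he⟩ := fddsIso_iff_semiconj.1 (hf _ _ _ _ hprod)
  obtain ⟨x, hx⟩ := (exists_isFixedPt_cyclesMap_iff hL fun d => (μ d).toNat * (L / d)).2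
    (by simpa using Nat.pos_of_ne_zero hL)
  simpa using (exists_isFixedPt_cyclesMap_iff hL fun d => (-μ d).toNat * (L / d)).1
    ⟨e x, hx.map he⟩

end Moebius

theorem homCount_polyEval [Finite κ] [Finite α] {m : ℕ} {γ : Fin (m + 1) → Type}
    [∀ i, Finite (γ i)] (g : ∀ i, γ i → γ i) (f : α → α) (hw : IsConnected w) :
    homCount w (polyEval g f) = ∑ i, homCount w (g i) * homCount w f ^ (i : ℕ) := by
  refine (homCount_sigma hw fun i => Prod.map (g i) (powMap f i)).trans
    (Finset.sum_congr rfl fun _ _ => ?_)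
  rw [homCount_prod, homCount_powMap]

theorem strictMono_sum_mul_pow {ι : Type} [Fintype ι] (c e : ι → ℕ) {i₀ : ι} (he : e i₀ ≠ 0)
    (hc : 0 < c i₀) : StrictMono fun x : ℕ => ∑ i, c i * x ^ e i := fun _ _ hxy =>
  Finset.sum_lt_sum (fun _ _ => Nat.mul_le_mul_left _ (Nat.pow_le_pow_left hxy.le _))
    ⟨i₀, Finset.mem_univ _, Nat.mul_lt_mul_of_pos_left (Nat.pow_lt_pow_left hxy he) hc⟩

end Fdds

/-- A polynomial `P = Σ_{i=0}^m A_i X^i` with at least one cancelable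
non-constant coefficient is injective up to isomorphism. -/
theorem poly_injective_of_cancelable {m : ℕ} {γ : Fin (m + 1) → Type} [∀ i, Fintype (γ i)]
    (g : ∀ i, γ i → γ i) (hc : ∃ i : Fin (m + 1), 1 ≤ i.val ∧ Cancelable (g i))
    {α β : Type} [Fintype α] [Fintype β] (f : α → α) (f' : β → β)
    (h : FddsIso (polyEval g f) (polyEval g f')) :
    FddsIso f f' := by
  obtain ⟨i₀, hi₀, hcan⟩ := hc
  obtain ⟨z, hz⟩ := hcan.exists_isFixedPt
  refine Fdds.fddsIso_of_homCount_eq_of_isConnected fun κ _ w hw => ?_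
  have hP := Fdds.homCount_congr_right w h
  rw [Fdds.homCount_polyEval g f hw, Fdds.homCount_polyEval g f' hw] at hP
  exact (Fdds.strictMono_sum_mul_pow _ Fin.val (by omega : i₀.val ≠ 0)
    (Fdds.homCount_pos_of_isFixedPt w hz)).injective hP
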